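/- arXiv:2006.10179 — 4 statements merged into one kernel-verified Lean document; each statement's English description precedes it below -/
import Mathlib

section
/- Let C ⊆ ℝ^m and K ⊆ ℝ^n be convex sets, f, g : C × K → ℝ, f̃ : C → ℝ^ñ, g̃ : K → ℝ^m̃, and let C̃ ⊆ ℝ^ñ, K̃ ⊆ ℝ^m̃ be closed convex cones with polar cones C̃° and K̃°. A pair of strategies (x̄, μ̄) ∈ C × K̃° and (ȳ, ν̄) ∈ K × C̃° is a Nash equilibrium of the Lagrangian game (min_{x∈C, μ∈K̃°} f(x,y) + νᵀf̃(x) − μᵀg̃(y), min_{y∈K, ν∈C̃°} g(x,y) + μᵀg̃(y) − νᵀf̃(x)) if and only if (x̄, ν̄) is a Nash equilibrium of the zero-sum game min_{x∈C} max_{ν∈C̃°} F(x) + νᵀf̃(x) and (ȳ, μ̄) is a Nash equilibrium of the zero-sum game min_{y∈K} max_{μ∈K̃°} G(y) + μᵀg̃(y), where F(x) := f(x, ȳ) and G(y) := g(x̄, y). -/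
/-!
Each player's Lagrangian cost separates into a term in its own primal strategy and a term in its
own multiplier (entering with a minus sign), so a best response is a minimiser of the first term
together with a maximiser of the second. Regrouping the primal half of one player's condition with
the multiplier half of the other player's gives exactly the two saddle-point conditions.
-/

open Finset

def polarCone {d : ℕ} (K : Set (Fin d → ℝ)) : Set (Fin d → ℝ) :=
  {y | ∀ x ∈ K, ∑ i, x i * y i ≤ 0}

theorem forall_mem_sub_le_sub_iff {α β M : Type*} [AddCommGroup M] [PartialOrder M]
    [IsOrderedAddMonoid M] {S : Set α} {T : Set β} {φ : α → M} {ψ : β → M} {a : α} {b : β}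
    (ha : a ∈ S) (hb : b ∈ T) :
    (∀ x ∈ S, ∀ y ∈ T, φ a - ψ b ≤ φ x - ψ y) ↔ (∀ x ∈ S, φ a ≤ φ x) ∧ (∀ y ∈ T, ψ y ≤ ψ b) := by
  refine ⟨fun h => ⟨fun x hx => ?_, fun y hy => ?_⟩,
    fun ⟨hφ, hψ⟩ x hx y hy => sub_le_sub (hφ x hx) (hψ y hy)⟩
  · exact sub_le_sub_iff_right _ |>.mp (h x hx b hb)
  · exact sub_le_sub_iff_left _ |>.mp (h a ha y hy)

theorem stmt_1_general {m n nt mt : ℕ}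
    (C : Set (Fin m → ℝ)) (K : Set (Fin n → ℝ))
    (f g : (Fin m → ℝ) → (Fin n → ℝ) → ℝ)
    (ft : (Fin m → ℝ) → (Fin nt → ℝ)) (gt : (Fin n → ℝ) → (Fin mt → ℝ))
    (Ct : Set (Fin nt → ℝ)) (Kt : Set (Fin mt → ℝ))
    (F : (Fin m → ℝ) → ℝ) (G : (Fin n → ℝ) → ℝ)
    (xb : Fin m → ℝ) (μb : Fin mt → ℝ) (yb : Fin n → ℝ) (νb : Fin nt → ℝ)
    (hF : F = fun x => f x yb) (hG : G = fun y => g xb y)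
    (hxb : xb ∈ C) (hμb : μb ∈ polarCone Kt) (hyb : yb ∈ K) (hνb : νb ∈ polarCone Ct) :
    -- Nash equilibrium of the Lagrangian game: each player's pair of strategies is
    -- a best response to the other player's pair of strategies
    ((∀ x ∈ C, ∀ μ ∈ polarCone Kt,
        f xb yb + (∑ i, νb i * ft xb i) - (∑ j, μb j * gt yb j)
          ≤ f x yb + (∑ i, νb i * ft x i) - (∑ j, μ j * gt yb j)) ∧
     (∀ y ∈ K, ∀ ν ∈ polarCone Ct,
        g xb yb + (∑ j, μb j * gt yb j) - (∑ i, νb i * ft xb i)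
          ≤ g xb y + (∑ j, μb j * gt y j) - (∑ i, ν i * ft xb i)))
      ↔
    -- (xb, νb) is a saddle point of min_{x ∈ C} max_{ν ∈ Ct°} F(x) + νᵀ f̃(x), and
    -- (yb, μb) is a saddle point of min_{y ∈ K} max_{μ ∈ Kt°} G(y) + μᵀ g̃(y)
    (((∀ x ∈ C, F xb + (∑ i, νb i * ft xb i) ≤ F x + (∑ i, νb i * ft x i)) ∧
      (∀ ν ∈ polarCone Ct, F xb + (∑ i, ν i * ft xb i) ≤ F xb + (∑ i, νb i * ft xb i))) ∧
     ((∀ y ∈ K, G yb + (∑ j, μb j * gt yb j) ≤ G y + (∑ j, μb j * gt y j)) ∧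
      (∀ μ ∈ polarCone Kt, G yb + (∑ j, μ j * gt yb j) ≤ G yb + (∑ j, μb j * gt yb j)))) := by
  subst hF hG
  rw [forall_mem_sub_le_sub_iff (φ := fun x => f x yb + ∑ i, νb i * ft x i)
      (ψ := fun μ => ∑ j, μ j * gt yb j) hxb hμb,
    forall_mem_sub_le_sub_iff (φ := fun y => g xb y + ∑ j, μb j * gt y j)
      (ψ := fun ν => ∑ i, ν i * ft xb i) hyb hνb]
  simp only [add_le_add_iff_left]
  tauto

/-- `((xb, μb), (yb, νb))` is a Nash equilibrium of the Lagrangian game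
iff `(xb, νb)` is a saddle point of `min_{x ∈ C} max_{ν ∈ Ct°} F(x) + νᵀ f̃(x)` and
`(yb, μb)` is a saddle point of `min_{y ∈ K} max_{μ ∈ Kt°} G(y) + μᵀ g̃(y)`,
where `F(x) = f(x, yb)` and `G(y) = g(xb, y)`. -/
theorem stmt_1 {m n nt mt : ℕ}
    (C : Set (Fin m → ℝ)) (K : Set (Fin n → ℝ))
    (hC : Convex ℝ C) (hK : Convex ℝ K)
    (f g : (Fin m → ℝ) → (Fin n → ℝ) → ℝ)
    (ft : (Fin m → ℝ) → (Fin nt → ℝ)) (gt : (Fin n → ℝ) → (Fin mt → ℝ))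
    (Ct : Set (Fin nt → ℝ)) (Kt : Set (Fin mt → ℝ))
    (hCt_conv : Convex ℝ Ct) (hCt_closed : IsClosed Ct)
    (hCt_cone : ∀ t : ℝ, 0 ≤ t → ∀ z ∈ Ct, t • z ∈ Ct)
    (hKt_conv : Convex ℝ Kt) (hKt_closed : IsClosed Kt)
    (hKt_cone : ∀ t : ℝ, 0 ≤ t → ∀ z ∈ Kt, t • z ∈ Kt)
    (F : (Fin m → ℝ) → ℝ) (G : (Fin n → ℝ) → ℝ)
    (xb : Fin m → ℝ) (μb : Fin mt → ℝ) (yb : Fin n → ℝ) (νb : Fin nt → ℝ)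
    (hF : F = fun x => f x yb) (hG : G = fun y => g xb y)
    (hxb : xb ∈ C) (hμb : μb ∈ polarCone Kt) (hyb : yb ∈ K) (hνb : νb ∈ polarCone Ct) :
    -- Nash equilibrium of the Lagrangian game: each player's pair of strategies is
    -- a best response to the other player's pair of strategies
    ((∀ x ∈ C, ∀ μ ∈ polarCone Kt,
        f xb yb + (∑ i, νb i * ft xb i) - (∑ j, μb j * gt yb j)
          ≤ f x yb + (∑ i, νb i * ft x i) - (∑ j, μ j * gt yb j)) ∧
     (∀ y ∈ K, ∀ ν ∈ polarCone Ct,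
        g xb yb + (∑ j, μb j * gt yb j) - (∑ i, νb i * ft xb i)
          ≤ g xb y + (∑ j, μb j * gt y j) - (∑ i, ν i * ft xb i)))
      ↔
    -- (xb, νb) is a saddle point of min_{x ∈ C} max_{ν ∈ Ct°} F(x) + νᵀ f̃(x), and
    -- (yb, μb) is a saddle point of min_{y ∈ K} max_{μ ∈ Kt°} G(y) + μᵀ g̃(y)
    (((∀ x ∈ C, F xb + (∑ i, νb i * ft xb i) ≤ F x + (∑ i, νb i * ft x i)) ∧
      (∀ ν ∈ polarCone Ct, F xb + (∑ i, ν i * ft xb i) ≤ F xb + (∑ i, νb i * ft xb i))) ∧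
     ((∀ y ∈ K, G yb + (∑ j, μb j * gt yb j) ≤ G y + (∑ j, μb j * gt y j)) ∧
      (∀ μ ∈ polarCone Kt, G yb + (∑ j, μ j * gt yb j) ≤ G yb + (∑ j, μb j * gt yb j)))) :=
  stmt_1_general C K f g ft gt Ct Kt F G xb μb yb νb hF hG hxb hμb hyb hνb
end

section
/- Let C ⊆ ℝ^m, K ⊆ ℝ^n be convex sets, C̃ ⊆ ℝ^ñ, K̃ ⊆ ℝ^m̃ closed convex cones, and assume: (i) f, g : C × K → ℝ, f̃ : C → ℝ^ñ, g̃ : K → ℝ^m̃ are continuous; (ii) f̃ is convex with respect to the cone −C̃ and g̃ is convex with respect to the cone −K̃; (iii) for every ȳ ∈ K the function F(x) := f(x, ȳ) is convex on C, and for every x̄ ∈ C the function G(y) := g(x̄, y) is convex on K; (iv) for all x̄ ∈ C and ȳ ∈ K the infimum of F over {x ∈ C : f̃(x) ∈ C̃} and the infimum of G over {y ∈ K : g̃(y) ∈ K̃} are finite; (v) there exist x ∈ int C with f̃(x) ∈ int C̃ and y ∈ int K with g̃(y) ∈ int K̃ (Slater's condition). Then (x̄, ȳ) is a Nash equilibrium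 of the constrained game (min_{x∈C, f̃(x)∈C̃} f(x,y), min_{y∈K, g̃(y)∈K̃} g(x,y)) if and only if there exist ν̄ ∈ C̃° and μ̄ ∈ K̃° such that (x̄, μ̄) and (ȳ, ν̄) form a Nash equilibrium of the Lagrangian game (min_{x∈C, μ∈K̃°} f(x,y) + νᵀf̃(x) − μᵀg̃(y), min_{y∈K, ν∈C̃°} g(x,y) + μᵀg̃(y) − νᵀf̃(x)). -/
/-!
Each player faces a convex program with a cone constraint that satisfies Slater's condition.
Separating `(0, F x̄)` from the interior of the epigraph of the perturbation function gives the
KKT conditions, so a constrained minimiser is a saddle point of its Lagrangian `F + νᵀh` on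
`D × S°`; conversely, maximality of `ν` over the polar cone forces feasibility (bipolar theorem)
and complementary slackness. The payoff of each player in the Lagrangian game is their own
Lagrangian minus the other player's multiplier term, so its equilibria are exactly pairs of these
single-player saddle points.
-/

open Finset

/-- A function `h` is convex with respect to the cone `S` if
`τ h(x) + (1-τ) h(y) - h(τ x + (1-τ) y) ∈ S` for all `τ ∈ [0,1]` and `x, y` in the domain. -/
def ConvexWrtCone {d e : ℕ} (D : Set (Fin d → ℝ)) (h : (Fin d → ℝ) → (Fin e → ℝ))
    (S : Set (Fin e → ℝ)) : Prop :=
  ∀ τ ∈ Set.Icc (0 : ℝ) 1, ∀ x ∈ D, ∀ y ∈ D,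
    τ • h x + (1 - τ) • h y - h (τ • x + (1 - τ) • y) ∈ S

open Filter Topology

lemma nonneg_of_forall_le_mul {a b : ℝ} (h : ∀ t : ℝ, 0 ≤ t → a ≤ t * b) : 0 ≤ b := by
  by_contra! hb
  have hscaled : (|a| + 1) / -b * b = -(|a| + 1) := by field_simp [hb.ne]
  have := h ((|a| + 1) / -b) (div_nonneg (by positivity) (neg_nonneg.mpr hb.le))
  linarith [neg_abs_le a]

lemma add_mem_of_convex_of_smul_mem {E : Type*} [AddCommGroup E] [Module ℝ E] {S : Set E}
    (hS : Convex ℝ S) (hcone : ∀ t : ℝ, 0 ≤ t → ∀ z ∈ S, t • z ∈ S) {u v : E}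
    (hu : u ∈ S) (hv : v ∈ S) : u + v ∈ S := by
  have := hcone 2 zero_le_two _ (hS hu hv one_half_pos.le one_half_pos.le (add_halves 1))
  rwa [smul_add, smul_smul, smul_smul, mul_one_div_cancel two_ne_zero, one_smul, one_smul]
    at this

section PolarCone

variable {e : ℕ} {S : Set (Fin e → ℝ)}

lemma dotProduct_nonpos_of_mem_polarCone {x y : Fin e → ℝ} (hy : y ∈ polarCone S) (hx : x ∈ S) :
    y ⬝ᵥ x ≤ 0 :=
  dotProduct_comm y x ▸ hy x hx

lemma zero_mem_polarCone : (0 : Fin e → ℝ) ∈ polarCone S :=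
  fun x _ => (dotProduct_zero x).le

lemma add_mem_polarCone {y z : Fin e → ℝ} (hy : y ∈ polarCone S) (hz : z ∈ polarCone S) :
    y + z ∈ polarCone S := fun x hx => by
  change x ⬝ᵥ (y + z) ≤ 0
  rw [dotProduct_add]
  exact add_nonpos (hy x hx) (hz x hx)

lemma exists_dotProduct_eq (f : StrongDual ℝ (Fin e → ℝ)) : ∃ w : Fin e → ℝ, ∀ z, f z = w ⬝ᵥ z :=
  ⟨(dotProductEquiv ℝ (Fin e)).symm f.toLinearMap, fun z =>
    (LinearMap.congr_fun ((dotProductEquiv ℝ (Fin e)).apply_symm_apply f.toLinearMap) z).symm⟩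

/-- The bipolar theorem for closed convex cones. -/
theorem mem_of_forall_mem_polarCone (hconv : Convex ℝ S) (hclosed : IsClosed S)
    (hcone : ∀ t : ℝ, 0 ≤ t → ∀ z ∈ S, t • z ∈ S) (h0 : (0 : Fin e → ℝ) ∈ S)
    {z : Fin e → ℝ} (hz : ∀ y ∈ polarCone S, y ⬝ᵥ z ≤ 0) : z ∈ S := by
  by_contra hzS
  obtain ⟨f, u, hfS, hfz⟩ := geometric_hahn_banach_closed_point hconv hclosed hzS
  obtain ⟨w, hw⟩ := exists_dotProduct_eq f
  have hu : 0 < u := by simpa using hfS 0 h0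
  have hw_polar : w ∈ polarCone S := fun s hs => by
    change s ⬝ᵥ w ≤ 0
    refine neg_nonneg.mp (nonneg_of_forall_le_mul (a := -u) fun t ht => ?_)
    have := hfS _ (hcone t ht s hs)
    rw [hw, dotProduct_smul, smul_eq_mul, dotProduct_comm] at this
    linarith
  have := hz w hw_polar
  rw [hw] at hfz
  linarith

lemma mem_and_dotProduct_eq_zero_of_forall_le (hconv : Convex ℝ S) (hclosed : IsClosed S)
    (hcone : ∀ t : ℝ, 0 ≤ t → ∀ z ∈ S, t • z ∈ S) (h0 : (0 : Fin e → ℝ) ∈ S)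
    {ν z : Fin e → ℝ} (hν : ν ∈ polarCone S) (hmax : ∀ ν' ∈ polarCone S, ν' ⬝ᵥ z ≤ ν ⬝ᵥ z) :
    z ∈ S ∧ ν ⬝ᵥ z = 0 := by
  have hzS : z ∈ S := mem_of_forall_mem_polarCone hconv hclosed hcone h0 fun y hy => by
    have := hmax (ν + y) (add_mem_polarCone hν hy)
    rw [add_dotProduct] at this
    linarith
  refine ⟨hzS, le_antisymm (dotProduct_nonpos_of_mem_polarCone hν hzS) ?_⟩
  simpa using hmax 0 zero_mem_polarCone

lemma eq_zero_of_isLocalMin_dotProduct {w z : Fin e → ℝ} (h : IsLocalMin (w ⬝ᵥ ·) z) :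
    w = 0 := by
  let L := LinearMap.toContinuousLinearMap (dotProductEquiv ℝ (Fin e) w)
  have hL : L = 0 := h.hasFDerivAt_eq_zero L.hasFDerivAt
  simpa [L] using congr($hL w)

end PolarCone

lemma exists_supporting_dotProduct {e : ℕ} {A : Set ((Fin e → ℝ) × ℝ)} (hA : Convex ℝ A)
    (hA_int : (interior A).Nonempty) {p : (Fin e → ℝ) × ℝ} (hp : p ∉ interior A) :
    ∃ (w : Fin e → ℝ) (c : ℝ), (w, c) ≠ 0 ∧
      ∀ q ∈ A, w ⬝ᵥ q.1 + c * q.2 ≤ w ⬝ᵥ p.1 + c * p.2 := by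
  obtain ⟨φ, hφ, hφA⟩ := geometric_hahn_banach_of_nonempty_interior_point hA hp hA_int
  obtain ⟨w, hw⟩ := exists_dotProduct_eq (φ.comp (.inl ℝ _ ℝ))
  have hφ_eq (q : (Fin e → ℝ) × ℝ) : φ q = w ⬝ᵥ q.1 + φ (0, 1) * q.2 := by
    rw [← φ.comp_inl_add_comp_inr q, hw, mul_comm, ← smul_eq_mul, ← map_smul]
    simp
  refine ⟨w, φ (0, 1), fun hwc => hφ ?_, fun q hq => ?_⟩
  · obtain ⟨rfl, hc⟩ := Prod.mk_eq_zero.mp hwc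
    refine ContinuousLinearMap.ext fun q => ?_
    rw [hφ_eq, hc]
    simp
  · simpa only [← hφ_eq] using hφA q hq

lemma constrained_min_of_lagrangian_saddle {α : Type*} {e : ℕ} {D : Set α}
    {S : Set (Fin e → ℝ)} {F : α → ℝ} {h : α → Fin e → ℝ} (hS : Convex ℝ S)
    (hSclosed : IsClosed S) (hScone : ∀ t : ℝ, 0 ≤ t → ∀ z ∈ S, t • z ∈ S)
    (h0S : (0 : Fin e → ℝ) ∈ S) {xb : α} {ν : Fin e → ℝ} (hν : ν ∈ polarCone S)
    (hx : ∀ x ∈ D, F xb + ν ⬝ᵥ h xb ≤ F x + ν ⬝ᵥ h x)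
    (hν' : ∀ ν' ∈ polarCone S, ν' ⬝ᵥ h xb ≤ ν ⬝ᵥ h xb) :
    h xb ∈ S ∧ ∀ x ∈ D, h x ∈ S → F xb ≤ F x := by
  obtain ⟨hxbS, hslack⟩ := mem_and_dotProduct_eq_zero_of_forall_le hS hSclosed hScone h0S hν hν'
  refine ⟨hxbS, fun x hxD hxS => ?_⟩
  linarith [hx x hxD, dotProduct_nonpos_of_mem_polarCone hν hxS]

section Lagrange

variable {d e : ℕ} {D : Set (Fin d → ℝ)} {S : Set (Fin e → ℝ)} {F : (Fin d → ℝ) → ℝ}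
  {h : (Fin d → ℝ) → (Fin e → ℝ)}

/-- The epigraph of the perturbation function `u ↦ inf {F x | x ∈ D, h x - u ∈ S}`. -/
def perturbationEpigraph (D : Set (Fin d → ℝ)) (S : Set (Fin e → ℝ)) (F : (Fin d → ℝ) → ℝ)
    (h : (Fin d → ℝ) → (Fin e → ℝ)) : Set ((Fin e → ℝ) × ℝ) :=
  {p | ∃ x ∈ D, h x - p.1 ∈ S ∧ F x ≤ p.2}

lemma convex_perturbationEpigraph (hD : Convex ℝ D) (hS : Convex ℝ S)
    (hScone : ∀ t : ℝ, 0 ≤ t → ∀ z ∈ S, t • z ∈ S) (hF : ConvexOn ℝ D F)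
    (hh : ConvexWrtCone D h (-S)) : Convex ℝ (perturbationEpigraph D S F h) := by
  rintro p ⟨x, hxD, hxS, hxp⟩ q ⟨y, hyD, hyS, hyq⟩ a b ha hb hab
  obtain rfl : b = 1 - a := by linarith
  refine ⟨a • x + (1 - a) • y, hD hxD hyD ha hb hab, ?_, ?_⟩
  · have hgap := hh a ⟨ha, by linarith⟩ x hxD y hyD
    have hsplit : h (a • x + (1 - a) • y) - (a • p + (1 - a) • q).1
        = -(a • h x + (1 - a) • h y - h (a • x + (1 - a) • y))
          + (a • (h x - p.1) + (1 - a) • (h y - q.1)) := by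
      simp only [Prod.fst_add, Prod.smul_fst]
      module
    rw [hsplit]
    exact add_mem_of_convex_of_smul_mem hS hScone hgap (hS hxS hyS ha hb hab)
  · calc F (a • x + (1 - a) • y) ≤ a • F x + (1 - a) • F y := hF.2 hxD hyD ha hb hab
      _ ≤ (a • p + (1 - a) • q).2 := by
        simp only [Prod.snd_add, Prod.smul_snd, smul_eq_mul]
        gcongr

lemma mem_interior_perturbationEpigraph {x₀ : Fin d → ℝ} (hx₀D : x₀ ∈ D)
    (hx₀S : h x₀ ∈ interior S) :
    ((0 : Fin e → ℝ), F x₀ + 1) ∈ interior (perturbationEpigraph D S F h) := by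
  have hopen : IsOpen {p : (Fin e → ℝ) × ℝ | h x₀ - p.1 ∈ interior S ∧ F x₀ < p.2} :=
    (isOpen_interior.preimage (by fun_prop)).inter (isOpen_lt continuous_const continuous_snd)
  refine interior_maximal ?_ hopen ⟨by simpa using hx₀S, by simp⟩
  exact fun p hp => ⟨x₀, hx₀D, interior_subset hp.1, hp.2.le⟩

lemma notMem_interior_perturbationEpigraph {xb : Fin d → ℝ}
    (hopt : ∀ x ∈ D, h x ∈ S → F xb ≤ F x) :
    ((0 : Fin e → ℝ), F xb) ∉ interior (perturbationEpigraph D S F h) := by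
  intro hmem
  have hshift : Tendsto (fun t : ℝ => ((0 : Fin e → ℝ), F xb - t)) (𝓝[>] 0) (𝓝 (0, F xb)) :=
    (Continuous.tendsto' (by fun_prop) 0 _ (by simp)).mono_left nhdsWithin_le_nhds
  obtain ⟨t, ⟨x, hxD, hxS, hxt⟩, ht⟩ :=
    ((hshift.eventually (mem_interior_iff_mem_nhds.mp hmem)).and self_mem_nhdsWithin).exists
  have := hopt x hxD (by simpa using hxS)
  simp only at hxt ht
  linarith

/-- Separate `(0, F xb)` from the interior of the perturbation epigraph; Slater's point forces the
separating functional to have a nonzero `ℝ`-component. -/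
theorem exists_lagrangeMultiplier (hD : Convex ℝ D) (hS : Convex ℝ S)
    (hScone : ∀ t : ℝ, 0 ≤ t → ∀ z ∈ S, t • z ∈ S) (hF : ConvexOn ℝ D F)
    (hh : ConvexWrtCone D h (-S)) {xb : Fin d → ℝ} (hxbD : xb ∈ D) (hxbS : h xb ∈ S)
    (hopt : ∀ x ∈ D, h x ∈ S → F xb ≤ F x) {x₀ : Fin d → ℝ} (hx₀D : x₀ ∈ D)
    (hx₀S : h x₀ ∈ interior S) :
    ∃ ν ∈ polarCone S, ν ⬝ᵥ h xb = 0 ∧ ∀ x ∈ D, F xb ≤ F x + ν ⬝ᵥ h x := by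
  obtain ⟨w, c, hwc, hsupp⟩ := exists_supporting_dotProduct
    (convex_perturbationEpigraph hD hS hScone hF hh)
    ⟨_, mem_interior_perturbationEpigraph hx₀D hx₀S⟩ (notMem_interior_perturbationEpigraph hopt)
  have h0S : (0 : Fin e → ℝ) ∈ S := by simpa using hScone 0 le_rfl _ hxbS
  have hmain : ∀ x ∈ D, ∀ s ∈ S, w ⬝ᵥ (h x - s) + c * F x ≤ c * F xb := fun x hx s hs => by
    simpa using hsupp (h x - s, F x) ⟨x, hx, by simpa using hs, le_rfl⟩
  have hc : c ≤ 0 := by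
    have := hsupp (0, F xb + 1) ⟨xb, hxbD, by simpa using hxbS, by simp⟩
    simp only [dotProduct_zero, zero_add, mul_add] at this
    linarith
  have hwS : ∀ s ∈ S, 0 ≤ w ⬝ᵥ s := fun s hs =>
    nonneg_of_forall_le_mul (a := w ⬝ᵥ h xb) fun t ht => by
    have := hmain xb hxbD (t • s) (hScone t ht s hs)
    rw [dotProduct_sub, dotProduct_smul, smul_eq_mul] at this
    linarith
  have hwxb : w ⬝ᵥ h xb = 0 := by
    have := hmain xb hxbD 0 h0S
    rw [sub_zero] at this
    linarith [hwS _ hxbS]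
  have hc0 : c ≠ 0 := by
    rintro rfl
    refine hwc (Prod.mk_eq_zero.mpr ⟨eq_zero_of_isLocalMin_dotProduct (z := h x₀) ?_, rfl⟩)
    have hx₀ := hmain x₀ hx₀D 0 h0S
    simp only [sub_zero, zero_mul, add_zero] at hx₀
    filter_upwards [mem_interior_iff_mem_nhds.mp hx₀S] with s hs
    exact hx₀.trans (hwS s hs)
  have hc_inv : c⁻¹ < 0 := inv_lt_zero.mpr (lt_of_le_of_ne hc hc0)
  refine ⟨c⁻¹ • w, fun s hs => ?_, ?_, fun x hx => ?_⟩
  · change s ⬝ᵥ (c⁻¹ • w) ≤ 0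
    rw [dotProduct_smul, smul_eq_mul, dotProduct_comm]
    exact mul_nonpos_of_nonpos_of_nonneg hc_inv.le (hwS s hs)
  · rw [smul_dotProduct, hwxb, smul_zero]
  · have := hmain x hx 0 h0S
    rw [sub_zero] at this
    have hdiv : c⁻¹ * (c * F xb - c * F x) ≤ c⁻¹ * (w ⬝ᵥ h x) :=
      mul_le_mul_of_nonpos_left (by linarith) hc_inv.le
    rw [← mul_sub, inv_mul_cancel_left₀ hc0] at hdiv
    rw [smul_dotProduct, smul_eq_mul]
    linarith

theorem constrained_min_iff_exists_lagrangian_saddle (hD : Convex ℝ D) (hS : Convex ℝ S)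
    (hSclosed : IsClosed S) (hScone : ∀ t : ℝ, 0 ≤ t → ∀ z ∈ S, t • z ∈ S)
    (hF : ConvexOn ℝ D F) (hh : ConvexWrtCone D h (-S))
    (hslater : ∃ x₀ ∈ D, h x₀ ∈ interior S) {xb : Fin d → ℝ} (hxbD : xb ∈ D) :
    (h xb ∈ S ∧ ∀ x ∈ D, h x ∈ S → F xb ≤ F x) ↔
      ∃ ν ∈ polarCone S, (∀ x ∈ D, F xb + ν ⬝ᵥ h xb ≤ F x + ν ⬝ᵥ h x) ∧
        ∀ ν' ∈ polarCone S, ν' ⬝ᵥ h xb ≤ ν ⬝ᵥ h xb := by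
  obtain ⟨x₀, hx₀D, hx₀S⟩ := hslater
  constructor
  · rintro ⟨hxbS, hopt⟩
    obtain ⟨ν, hν, hslack, hle⟩ :=
      exists_lagrangeMultiplier hD hS hScone hF hh hxbD hxbS hopt hx₀D hx₀S
    refine ⟨ν, hν, fun x hx => ?_, fun ν' hν' => ?_⟩
    · simpa [hslack] using hle x hx
    · simpa [hslack] using dotProduct_nonpos_of_mem_polarCone hν' hxbS
  · rintro ⟨ν, hν, hx, hν'⟩
    have h0S : (0 : Fin e → ℝ) ∈ S := by simpa using hScone 0 le_rfl _ (interior_subset hx₀S)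
    exact constrained_min_of_lagrangian_saddle hS hSclosed hScone h0S hν hx hν'

end Lagrange

lemma forall_sub_le_sub_iff {α β : Type*} {X : Set α} {M : Set β} (a : α → ℝ) (b : β → ℝ)
    {x₀ : α} {μ₀ : β} (hx₀ : x₀ ∈ X) (hμ₀ : μ₀ ∈ M) :
    (∀ x ∈ X, ∀ μ ∈ M, a x₀ - b μ₀ ≤ a x - b μ) ↔
      (∀ x ∈ X, a x₀ ≤ a x) ∧ ∀ μ ∈ M, b μ ≤ b μ₀ :=
  ⟨fun h => ⟨fun x hx => by linarith [h x hx μ₀ hμ₀], fun μ hμ => by linarith [h x₀ hx₀ μ hμ]⟩,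
    fun ⟨ha, hb⟩ x hx μ hμ => by linarith [ha x hx, hb μ hμ]⟩

theorem stmt_2_general {m n nt mt : ℕ}
    (C : Set (Fin m → ℝ)) (K : Set (Fin n → ℝ))
    (hC : Convex ℝ C) (hK : Convex ℝ K)
    (Ct : Set (Fin nt → ℝ)) (Kt : Set (Fin mt → ℝ))
    (hCt_conv : Convex ℝ Ct) (hCt_closed : IsClosed Ct)
    (hCt_cone : ∀ t : ℝ, 0 ≤ t → ∀ z ∈ Ct, t • z ∈ Ct)
    (hKt_conv : Convex ℝ Kt) (hKt_closed : IsClosed Kt)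
    (hKt_cone : ∀ t : ℝ, 0 ≤ t → ∀ z ∈ Kt, t • z ∈ Kt)
    (f g : (Fin m → ℝ) → (Fin n → ℝ) → ℝ)
    (ft : (Fin m → ℝ) → (Fin nt → ℝ)) (gt : (Fin n → ℝ) → (Fin mt → ℝ))
    -- (ii) cone-convexity of the constraint maps
    (hft_conv : ConvexWrtCone C ft (-Ct)) (hgt_conv : ConvexWrtCone K gt (-Kt))
    -- (iii) convexity of the decoupled objectives
    (hf_conv : ∀ y ∈ K, ConvexOn ℝ C (fun x => f x y))
    (hg_conv : ∀ x ∈ C, ConvexOn ℝ K (fun y => g x y))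
    -- (v) Slater's condition
    (hslater : ∃ x y, x ∈ interior C ∧ ft x ∈ interior Ct ∧
      y ∈ interior K ∧ gt y ∈ interior Kt)
    (xb : Fin m → ℝ) (yb : Fin n → ℝ) :
    -- (xb, yb) is a Nash equilibrium of the constrained game ...
    (xb ∈ C ∧ ft xb ∈ Ct ∧ yb ∈ K ∧ gt yb ∈ Kt ∧
     (∀ x ∈ C, ft x ∈ Ct → f xb yb ≤ f x yb) ∧
     (∀ y ∈ K, gt y ∈ Kt → g xb yb ≤ g xb y))
      ↔
    -- ... iff there exist multipliers making it a Nash equilibrium of the Lagrangian game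
    (∃ νb ∈ polarCone Ct, ∃ μb ∈ polarCone Kt,
      xb ∈ C ∧ yb ∈ K ∧
      (∀ x ∈ C, ∀ μ ∈ polarCone Kt,
        f xb yb + (∑ i, νb i * ft xb i) - (∑ j, μb j * gt yb j)
          ≤ f x yb + (∑ i, νb i * ft x i) - (∑ j, μ j * gt yb j)) ∧
      (∀ y ∈ K, ∀ ν ∈ polarCone Ct,
        g xb yb + (∑ j, μb j * gt yb j) - (∑ i, νb i * ft xb i)
          ≤ g xb y + (∑ j, μb j * gt y j) - (∑ i, ν i * ft xb i))) := by
  obtain ⟨x₀, y₀, hx₀, hftx₀, hy₀, hgty₀⟩ := hslater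
  have player₁ (hxb : xb ∈ C) (hyb : yb ∈ K) :=
    constrained_min_iff_exists_lagrangian_saddle hC hCt_conv hCt_closed hCt_cone (hf_conv yb hyb)
      hft_conv ⟨x₀, interior_subset hx₀, hftx₀⟩ hxb
  have player₂ (hxb : xb ∈ C) (hyb : yb ∈ K) :=
    constrained_min_iff_exists_lagrangian_saddle hK hKt_conv hKt_closed hKt_cone (hg_conv xb hxb)
      hgt_conv ⟨y₀, interior_subset hy₀, hgty₀⟩ hyb
  constructor
  · rintro ⟨hxb, hftxb, hyb, hgtyb, hxopt, hyopt⟩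
    obtain ⟨νb, hνb, hx, hν⟩ := (player₁ hxb hyb).mp ⟨hftxb, hxopt⟩
    obtain ⟨μb, hμb, hy, hμ⟩ := (player₂ hxb hyb).mp ⟨hgtyb, hyopt⟩
    refine ⟨νb, hνb, μb, hμb, hxb, hyb, ?_, ?_⟩
    · exact (forall_sub_le_sub_iff (fun x => f x yb + νb ⬝ᵥ ft x) (· ⬝ᵥ gt yb) hxb hμb).mpr
        ⟨hx, hμ⟩
    · exact (forall_sub_le_sub_iff (fun y => g xb y + μb ⬝ᵥ gt y) (· ⬝ᵥ ft xb) hyb hνb).mpr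
        ⟨hy, hν⟩
  · rintro ⟨νb, hνb, μb, hμb, hxb, hyb, hxμ, hyν⟩
    obtain ⟨hx, hμ⟩ :=
      (forall_sub_le_sub_iff (fun x => f x yb + νb ⬝ᵥ ft x) (· ⬝ᵥ gt yb) hxb hμb).mp hxμ
    obtain ⟨hy, hν⟩ :=
      (forall_sub_le_sub_iff (fun y => g xb y + μb ⬝ᵥ gt y) (· ⬝ᵥ ft xb) hyb hνb).mp hyν
    obtain ⟨hftxb, hxopt⟩ := (player₁ hxb hyb).mpr ⟨νb, hνb, hx, hν⟩
    obtain ⟨hgtyb, hyopt⟩ := (player₂ hxb hyb).mpr ⟨μb, hμb, hy, hμ⟩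
    exact ⟨hxb, hftxb, hyb, hgtyb, hxopt, hyopt⟩

/-- under continuity, cone-convexity, convexity, finiteness and Slater's
condition, `(xb, yb)` is a Nash equilibrium of the constrained game iff there are
Lagrange multipliers `νb ∈ Ct°`, `μb ∈ Kt°` such that `((xb, μb), (yb, νb))` is a
Nash equilibrium of the Lagrangian game. -/
theorem stmt_2 {m n nt mt : ℕ}
    (C : Set (Fin m → ℝ)) (K : Set (Fin n → ℝ))
    (hC : Convex ℝ C) (hK : Convex ℝ K)
    (Ct : Set (Fin nt → ℝ)) (Kt : Set (Fin mt → ℝ))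
    (hCt_conv : Convex ℝ Ct) (hCt_closed : IsClosed Ct)
    (hCt_cone : ∀ t : ℝ, 0 ≤ t → ∀ z ∈ Ct, t • z ∈ Ct)
    (hKt_conv : Convex ℝ Kt) (hKt_closed : IsClosed Kt)
    (hKt_cone : ∀ t : ℝ, 0 ≤ t → ∀ z ∈ Kt, t • z ∈ Kt)
    (f g : (Fin m → ℝ) → (Fin n → ℝ) → ℝ)
    (ft : (Fin m → ℝ) → (Fin nt → ℝ)) (gt : (Fin n → ℝ) → (Fin mt → ℝ))
    -- (i) continuity
    (hf_cont : ContinuousOn (fun p : (Fin m → ℝ) × (Fin n → ℝ) => f p.1 p.2) (C ×ˢ K))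
    (hg_cont : ContinuousOn (fun p : (Fin m → ℝ) × (Fin n → ℝ) => g p.1 p.2) (C ×ˢ K))
    (hft_cont : ContinuousOn ft C) (hgt_cont : ContinuousOn gt K)
    -- (ii) cone-convexity of the constraint maps
    (hft_conv : ConvexWrtCone C ft (-Ct)) (hgt_conv : ConvexWrtCone K gt (-Kt))
    -- (iii) convexity of the decoupled objectives
    (hf_conv : ∀ y ∈ K, ConvexOn ℝ C (fun x => f x y))
    (hg_conv : ∀ x ∈ C, ConvexOn ℝ K (fun y => g x y))
    -- (iv) finiteness of the minimal values of the decoupled constrained problems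
    (hf_bdd : ∀ y ∈ K, BddBelow ((fun x => f x y) '' {x | x ∈ C ∧ ft x ∈ Ct}))
    (hg_bdd : ∀ x ∈ C, BddBelow ((fun y => g x y) '' {y | y ∈ K ∧ gt y ∈ Kt}))
    -- (v) Slater's condition
    (hslater : ∃ x y, x ∈ interior C ∧ ft x ∈ interior Ct ∧
      y ∈ interior K ∧ gt y ∈ interior Kt)
    (xb : Fin m → ℝ) (yb : Fin n → ℝ) :
    -- (xb, yb) is a Nash equilibrium of the constrained game ...
    (xb ∈ C ∧ ft xb ∈ Ct ∧ yb ∈ K ∧ gt yb ∈ Kt ∧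
     (∀ x ∈ C, ft x ∈ Ct → f xb yb ≤ f x yb) ∧
     (∀ y ∈ K, gt y ∈ Kt → g xb yb ≤ g xb y))
      ↔
    -- ... iff there exist multipliers making it a Nash equilibrium of the Lagrangian game
    (∃ νb ∈ polarCone Ct, ∃ μb ∈ polarCone Kt,
      xb ∈ C ∧ yb ∈ K ∧
      (∀ x ∈ C, ∀ μ ∈ polarCone Kt,
        f xb yb + (∑ i, νb i * ft xb i) - (∑ j, μb j * gt yb j)
          ≤ f x yb + (∑ i, νb i * ft x i) - (∑ j, μ j * gt yb j)) ∧
      (∀ y ∈ K, ∀ ν ∈ polarCone Ct,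
        g xb yb + (∑ j, μb j * gt yb j) - (∑ i, νb i * ft xb i)
          ≤ g xb y + (∑ j, μb j * gt y j) - (∑ i, ν i * ft xb i))) :=
  stmt_2_general C K hC hK Ct Kt hCt_conv hCt_closed hCt_cone hKt_conv hKt_closed hKt_cone f g ft gt
    hft_conv hgt_conv hf_conv hg_conv hslater xb yb
end

section
/- Consider f(x, y) = 2xy − (1 − y)², g(x, y) = −f(x, y), and step size η = 1/4. Define the projected competitive gradient descent (PCGD) update at a point (x, y) by Δx = −η(1 − η² f_{xy} g_{yx})^{-1}(f_x − η f_{xy} g_y), Δy = −η(1 − η² g_{yx} f_{xy})^{-1}(g_y − η g_{yx} f_x), followed by projection onto the nonnegative orthant: (x', y') = (max(0, x + Δx), max(0, y + Δy)), where f_x = ∂f/∂x, g_y = ∂g/∂y, f_{xy} = ∂²f/∂x∂y, g_{yx} = ∂²g/∂y∂x are evaluated at (x, y). Then (x, y) = (0, 2/3) is a fixed point of this update, although (0, 2/3) is not a Nash equilibrium of the game constrained to x ≥ 0, y ≥ 0. -/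
/-- `f(x,y) = 2xy - (1-y)²`, the objective of the minimizing x-player. -/
def fGame (x y : ℝ) : ℝ := 2 * x * y - (1 - y) ^ 2

/-- `g = -f`, the objective of the minimizing y-player. -/
def gGame (x y : ℝ) : ℝ := -fGame x y

/-- `f_x = ∂f/∂x` evaluated at `(x, y)`. -/
noncomputable def fX (x y : ℝ) : ℝ := deriv (fun x' => fGame x' y) x

/-- `g_y = ∂g/∂y` evaluated at `(x, y)`. -/
noncomputable def gY (x y : ℝ) : ℝ := deriv (fun y' => gGame x y') y

/-- `f_{xy} = ∂²f/∂x∂y` evaluated at `(x, y)`. -/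
noncomputable def fXY (x y : ℝ) : ℝ := deriv (fun y' => deriv (fun x' => fGame x' y') x) y

/-- `g_{yx} = ∂²g/∂y∂x` evaluated at `(x, y)`. -/
noncomputable def gYX (x y : ℝ) : ℝ := deriv (fun x' => deriv (fun y' => gGame x' y') y) x

/-- The PCGD update with step size `η = 1/4`:
`Δx = -η (1 - η² f_{xy} g_{yx})⁻¹ (f_x - η f_{xy} g_y)`,
`Δy = -η (1 - η² g_{yx} f_{xy})⁻¹ (g_y - η g_{yx} f_x)`,
followed by projection onto the nonnegative orthant. -/
noncomputable def pcgdStep (p : ℝ × ℝ) : ℝ × ℝ :=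
  let x := p.1
  let y := p.2
  let η : ℝ := 1 / 4
  let Δx := -η * (1 - η ^ 2 * fXY x y * gYX x y)⁻¹ * (fX x y - η * fXY x y * gY x y)
  let Δy := -η * (1 - η ^ 2 * gYX x y * fXY x y)⁻¹ * (gY x y - η * gYX x y * fX x y)
  (max 0 (x + Δx), max 0 (y + Δy))

/-! At `(0, 2/3)` the x-player's gradient pushes `x` below `0`, so the projection clips it, while
the competitive correction `-η g_{yx} f_x` exactly cancels the y-player's own gradient
`g_y = -2/3`. Hence PCGD stalls there although `y ↦ g(0, y) = (1 - y)²` is strictly smaller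
at `y = 1`. -/

lemma hasDerivAt_fGame_fst (x y : ℝ) : HasDerivAt (fun x' => fGame x' y) (2 * y) x := by
  simpa [fGame] using (((hasDerivAt_id x).const_mul 2).mul_const y).sub_const ((1 - y) ^ 2)

lemma hasDerivAt_gGame_snd (x y : ℝ) :
    HasDerivAt (fun y' => gGame x y') (-2 * x + 2 * y - 2) y := by
  have h : HasDerivAt (fun y' => -(2 * x * y' - (1 - y') ^ 2)) (-2 * x + 2 * y - 2) y :=
    (((hasDerivAt_id' y).const_mul (2 * x)).fun_sub
      (((hasDerivAt_id' y).const_sub 1).fun_pow 2)).fun_neg.congr_deriv (by norm_num; ring)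
  simpa [gGame, fGame] using h

lemma fX_eq (x y : ℝ) : fX x y = 2 * y := (hasDerivAt_fGame_fst x y).deriv

lemma gY_eq (x y : ℝ) : gY x y = -2 * x + 2 * y - 2 := (hasDerivAt_gGame_snd x y).deriv

lemma fXY_eq (x y : ℝ) : fXY x y = 2 := by
  have h : (fun y' => deriv (fun x' => fGame x' y') x) = fun y' => 2 * y' :=
    funext fun y' => fX_eq x y'
  simp [fXY, h]

lemma gYX_eq (x y : ℝ) : gYX x y = -2 := by
  have h : (fun x' => deriv (fun y' => gGame x' y') y) = fun x' => -2 * x' + 2 * y - 2 :=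
    funext fun x' => gY_eq x' y
  simp [gYX, h]

lemma pcgdStep_eq (x y : ℝ) :
    pcgdStep (x, y) = (max 0 ((4 * x - y - 1) / 5), max 0 ((2 * x + 2 * y + 2) / 5)) := by
  simp only [pcgdStep, fX_eq, gY_eq, fXY_eq, gYX_eq, Prod.mk.injEq]
  constructor <;> congr 1 <;> ring

lemma gGame_zero_left (y : ℝ) : gGame 0 y = (1 - y) ^ 2 := by
  simp [gGame, fGame]

/-- `(0, 2/3)` is a fixed point of the PCGD update with `η = 1/4`,
although `(0, 2/3)` is not a Nash equilibrium of the game constrained to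
`x ≥ 0, y ≥ 0`. -/
theorem stmt_17 :
    pcgdStep (0, 2 / 3) = (0, 2 / 3) ∧
    ¬((∀ x : ℝ, 0 ≤ x → fGame 0 (2 / 3) ≤ fGame x (2 / 3)) ∧
      (∀ y : ℝ, 0 ≤ y → gGame 0 (2 / 3) ≤ gGame 0 y)) := by
  refine ⟨?_, fun ⟨_, hy⟩ => ?_⟩
  · rw [pcgdStep_eq]
    norm_num
  · have h := hy 1 zero_le_one
    rw [gGame_zero_left, gGame_zero_left] at h
    norm_num at h
end

section
/- Let A ∈ ℝ^{m×m} and B ∈ ℝ^{n×n} be symmetric positive definite, M ∈ ℝ^{m×n}, N ∈ ℝ^{m×n}, a ∈ ℝ^m, b ∈ ℝ^n, and suppose A − M B^{-1} Nᵀ and B − Nᵀ A^{-1} M are invertible. Then the regularized bilinear game in which the first player solves min_{x∈ℝ^m} aᵀx + xᵀMy + ½ xᵀAx and the second player solves min_{y∈ℝ^n} bᵀy + xᵀNy + ½ yᵀBy has a unique Nash equilibrium, given by x = −(A − M B^{-1} Nᵀ)^{-1}(a − M B^{-1} b) and y = −(B − Nᵀ A^{-1} M)^{-1}(b − Nᵀ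 A^{-1} a). -/
/-!
Each player's objective is a strictly convex quadratic in its own variable, so `(x̄, ȳ)` is a
Nash equilibrium iff both gradients vanish: `A x̄ = -(a + M ȳ)` and `B ȳ = -(b + Nᵀ x̄)`.
Eliminating `ȳ` through `B⁻¹` leaves the Schur-complement equation
`(A - M B⁻¹ Nᵀ) x̄ = -(a - M B⁻¹ b)`, and eliminating `x̄` through `A⁻¹` gives the formula for `ȳ`.
Conversely, eliminating `ȳ` turns the closed-form `x̄` into a solution `(x̄, y')` of the system,
and eliminating `x̄` from that solution shows that `y'` is the closed-form `ȳ`.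
-/

open Matrix

namespace Matrix

section Quadratic

variable {ι : Type*} [Fintype ι]

lemma IsSymm.quadratic_add {A : Matrix ι ι ℝ} (hA : A.IsSymm) (c x d : ι → ℝ) :
    c ⬝ᵥ (x + d) + 1 / 2 * ((x + d) ⬝ᵥ (A *ᵥ (x + d)))
      = c ⬝ᵥ x + 1 / 2 * (x ⬝ᵥ (A *ᵥ x)) + (A *ᵥ x + c) ⬝ᵥ d
        + 1 / 2 * (d ⬝ᵥ (A *ᵥ d)) := by
  have hcross : x ⬝ᵥ (A *ᵥ d) = (A *ᵥ x) ⬝ᵥ d := by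
    rw [dotProduct_mulVec, ← mulVec_transpose, hA.eq, dotProduct_comm]
  simp only [mulVec_add, dotProduct_add, add_dotProduct, hcross, dotProduct_comm d (A *ᵥ x)]
  ring

lemma PosDef.isMinimizer_quadratic_iff {A : Matrix ι ι ℝ} (hA : A.PosDef) (c x₀ : ι → ℝ) :
    (∀ x, c ⬝ᵥ x₀ + 1 / 2 * (x₀ ⬝ᵥ (A *ᵥ x₀)) ≤ c ⬝ᵥ x + 1 / 2 * (x ⬝ᵥ (A *ᵥ x)))
      ↔ A *ᵥ x₀ = -c := by
  have hsymm : A.IsSymm := isHermitian_iff_isSymm.mp hA.1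
  rw [← add_eq_zero_iff_eq_neg]
  constructor
  · intro hmin
    by_contra hg
    set g := A *ᵥ x₀ + c
    have hgAg : 0 < g ⬝ᵥ (A *ᵥ g) := by simpa using hA.dotProduct_mulVec_pos hg
    have hgg : 0 < g ⬝ᵥ g := by simpa using dotProduct_self_star_pos_iff.mpr hg
    -- step from `x₀` against the gradient, with the exact line-search length
    set t := (g ⬝ᵥ g) / (g ⬝ᵥ (A *ᵥ g))
    have ht : t * (g ⬝ᵥ (A *ᵥ g)) = g ⬝ᵥ g := div_mul_cancel₀ _ hgAg.ne'
    have hstep := hmin (x₀ + -(t • g))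
    rw [hsymm.quadratic_add] at hstep
    simp only [dotProduct_neg, neg_dotProduct, mulVec_neg, mulVec_smul, dotProduct_smul,
      smul_dotProduct, smul_eq_mul] at hstep
    nlinarith [mul_pos (div_pos hgg hgAg) hgg]
  · intro hg x
    have hd := hsymm.quadratic_add c x₀ (x - x₀)
    rw [add_sub_cancel, hg, zero_dotProduct] at hd
    have hpos : 0 ≤ (x - x₀) ⬝ᵥ (A *ᵥ (x - x₀)) := by
      simpa using hA.posSemidef.dotProduct_mulVec_nonneg (x - x₀)
    linarith

end Quadratic

lemma dotProduct_add_dotProduct_mulVec {R ι κ : Type*} [CommSemiring R] [Fintype ι] [Fintype κ]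
    (a x : ι → R) (M : Matrix ι κ R) (y : κ → R) :
    a ⬝ᵥ x + x ⬝ᵥ (M *ᵥ y) = (a + M *ᵥ y) ⬝ᵥ x := by
  rw [add_dotProduct, dotProduct_comm x]

lemma dotProduct_add_dotProduct_mulVec_transpose {R ι κ : Type*} [CommSemiring R] [Fintype ι]
    [Fintype κ] (b y : κ → R) (x : ι → R) (N : Matrix ι κ R) :
    b ⬝ᵥ y + x ⬝ᵥ (N *ᵥ y) = (b + Nᵀ *ᵥ x) ⬝ᵥ y := by
  rw [add_dotProduct, mulVec_transpose, ← dotProduct_mulVec]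

section LinearSystem

variable {R ι κ : Type*} [CommRing R] [Fintype ι] [DecidableEq ι] [Fintype κ] [DecidableEq κ]

lemma mulVec_eq_iff_eq_inv_mulVec {B : Matrix κ κ R} (hB : IsUnit B.det) {y v : κ → R} :
    B *ᵥ y = v ↔ y = B⁻¹ *ᵥ v := by
  constructor
  · rintro rfl
    rw [mulVec_mulVec, nonsing_inv_mul B hB, one_mulVec]
  · rintro rfl
    rw [mulVec_mulVec, mul_nonsing_inv B hB, one_mulVec]

variable {A : Matrix ι ι R} {B : Matrix κ κ R} {M : Matrix ι κ R} {P : Matrix κ ι R}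
  {a x : ι → R} {b y : κ → R}

lemma coupled_mulVec_eq_iff_schur (hB : IsUnit B.det) (hS : IsUnit (A - M * B⁻¹ * P).det) :
    (A *ᵥ x = -(a + M *ᵥ y) ∧ B *ᵥ y = -(b + P *ᵥ x)) ↔
      (x = -((A - M * B⁻¹ * P)⁻¹ *ᵥ (a - M *ᵥ (B⁻¹ *ᵥ b))) ∧
        y = -(B⁻¹ *ᵥ (b + P *ᵥ x))) := by
  rw [mulVec_eq_iff_eq_inv_mulVec hB, mulVec_neg]
  refine and_congr_left fun hy => ?_
  have hschur : A *ᵥ x + M *ᵥ y = (A - M * B⁻¹ * P) *ᵥ x - M *ᵥ (B⁻¹ *ᵥ b) := by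
    simp only [hy, sub_mulVec, mulVec_neg, mulVec_add, mulVec_mulVec, Matrix.mul_assoc]
    abel
  calc A *ᵥ x = -(a + M *ᵥ y)
      ↔ (A - M * B⁻¹ * P) *ᵥ x = -(a - M *ᵥ (B⁻¹ *ᵥ b)) := by
        constructor <;> intro h
        · linear_combination (norm := module) h - hschur
        · linear_combination (norm := module) h + hschur
    _ ↔ _ := by rw [mulVec_eq_iff_eq_inv_mulVec hS, mulVec_neg]

lemma coupled_mulVec_eq_iff (hA : IsUnit A.det) (hB : IsUnit B.det)
    (hS : IsUnit (A - M * B⁻¹ * P).det) (hT : IsUnit (B - P * A⁻¹ * M).det) :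
    (A *ᵥ x = -(a + M *ᵥ y) ∧ B *ᵥ y = -(b + P *ᵥ x)) ↔
      (x = -((A - M * B⁻¹ * P)⁻¹ *ᵥ (a - M *ᵥ (B⁻¹ *ᵥ b))) ∧
        y = -((B - P * A⁻¹ * M)⁻¹ *ᵥ (b - P *ᵥ (A⁻¹ *ᵥ a)))) := by
  constructor
  · intro h
    exact ⟨((coupled_mulVec_eq_iff_schur hB hS).1 h).1,
      ((coupled_mulVec_eq_iff_schur hA hT).1 h.symm).1⟩
  · rintro ⟨rfl, rfl⟩
    have hsol := (coupled_mulVec_eq_iff_schur (a := a) (b := b) hB hS).2 ⟨rfl, rfl⟩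
    rwa [← ((coupled_mulVec_eq_iff_schur hA hT).1 hsol.symm).1]

end LinearSystem

end Matrix

/-- the regularized bilinear game in which the first player solves
`min_x aᵀx + xᵀMy + ½ xᵀAx` and the second player solves `min_y bᵀy + xᵀNy + ½ yᵀBy`,
with `A`, `B` symmetric positive definite and `A - M B⁻¹ Nᵀ`, `B - Nᵀ A⁻¹ M`
invertible, has the unique Nash equilibrium
`x = -(A - M B⁻¹ Nᵀ)⁻¹ (a - M B⁻¹ b)`, `y = -(B - Nᵀ A⁻¹ M)⁻¹ (b - Nᵀ A⁻¹ a)`. -/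
theorem stmt_19 {m n : ℕ}
    (A : Matrix (Fin m) (Fin m) ℝ) (B : Matrix (Fin n) (Fin n) ℝ)
    (hA : A.PosDef) (hB : B.PosDef)
    (M N : Matrix (Fin m) (Fin n) ℝ) (a : Fin m → ℝ) (b : Fin n → ℝ)
    (h1 : IsUnit (A - M * B⁻¹ * Nᵀ).det) (h2 : IsUnit (B - Nᵀ * A⁻¹ * M).det) :
    ∀ xb : Fin m → ℝ, ∀ yb : Fin n → ℝ,
      -- (xb, yb) is a Nash equilibrium of the regularized bilinear game ...
      ((∀ x : Fin m → ℝ,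
          a ⬝ᵥ xb + xb ⬝ᵥ (M *ᵥ yb) + (1 / 2) * (xb ⬝ᵥ (A *ᵥ xb))
            ≤ a ⬝ᵥ x + x ⬝ᵥ (M *ᵥ yb) + (1 / 2) * (x ⬝ᵥ (A *ᵥ x))) ∧
       (∀ y : Fin n → ℝ,
          b ⬝ᵥ yb + xb ⬝ᵥ (N *ᵥ yb) + (1 / 2) * (yb ⬝ᵥ (B *ᵥ yb))
            ≤ b ⬝ᵥ y + xb ⬝ᵥ (N *ᵥ y) + (1 / 2) * (y ⬝ᵥ (B *ᵥ y))))
        ↔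
      -- ... iff it is given by the closed-form solution
      (xb = -((A - M * B⁻¹ * Nᵀ)⁻¹ *ᵥ (a - M *ᵥ (B⁻¹ *ᵥ b))) ∧
       yb = -((B - Nᵀ * A⁻¹ * M)⁻¹ *ᵥ (b - Nᵀ *ᵥ (A⁻¹ *ᵥ a)))) := by
  intro xb yb
  have hAd : IsUnit A.det := hA.det_pos.ne'.isUnit
  have hBd : IsUnit B.det := hB.det_pos.ne'.isUnit
  simp only [dotProduct_add_dotProduct_mulVec, dotProduct_add_dotProduct_mulVec_transpose,
    hA.isMinimizer_quadratic_iff, hB.isMinimizer_quadratic_iff]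
  exact coupled_mulVec_eq_iff hAd hBd h1 h2
end
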